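/- For every n ≥ 1 and every y = (y_0,…,y_n) ∈ {−1,1}^{n+1}, the ratio of partition functions satisfies Z_{0,n}(y_0,…,y_n) / Z_{1,n}(y_1,…,y_n) = cosh(w_0^{(n)})·exp(B(w_1^{(n)})) / cosh(w_1^{(n)}); consequently the conditional probability Q(y_0 | y_1,…,y_n) of the hidden Markov process equals (1/λ)·cosh(w_0^{(n)})·exp(B(w_1^{(n)}))/cosh(w_1^{(n)}). -/

import Mathlib

/-!
Summing out the last spin of the chain gives, for the neighbouring spin `s = ±1`,
`∑ₓ exp ((J s + h) x) = 2 cosh (h + J s) = exp (A(h) s + B(h))`, so the partition function of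
`N + 1` spins is `exp (B(h_N))` times that of `N` spins whose last field `h_{N-1}` is shifted to
`h_{N-1} + A(h_N)`. Iterating produces exactly the fields `w_i`, and
`Z_{0,n} = 2 cosh(w_0) exp(∑_{i=1}^n B(w_i))`. Since `Z_{1,n}` sees the fields `w_1, …, w_n`, the
ratio telescopes; the normalising constants of `Q` contribute the factor `1/λ`.
-/

open Finset Real

namespace IsingChain

def spinOf (b : Bool) : ℝ := if b then 1 else -1

@[simp] lemma spinOf_true : spinOf true = 1 := rfl
@[simp] lemma spinOf_false : spinOf false = -1 := rfl

lemma sum_exp_mul_spinOf (a : ℝ) : ∑ b : Bool, exp (a * spinOf b) = 2 * cosh a := by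
  rw [Fintype.sum_bool, spinOf_true, spinOf_false, mul_one, mul_neg_one, cosh_eq]
  ring

noncomputable def fieldShift (J u : ℝ) : ℝ := 1 / 2 * log (cosh (u + J) / cosh (u - J))

noncomputable def fieldLogNorm (J u : ℝ) : ℝ := 1 / 2 * log (4 * cosh (u + J) * cosh (u - J))

lemma fieldShift_zero (J : ℝ) : fieldShift J 0 = 0 := by
  simp [fieldShift, cosh_neg, div_self (cosh_pos J).ne']

lemma two_mul_cosh_add_mul_spinOf (J u : ℝ) (b : Bool) :
    2 * cosh (u + J * spinOf b) = exp (fieldShift J u * spinOf b + fieldLogNorm J u) := by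
  have hlog : fieldShift J u * spinOf b + fieldLogNorm J u =
      log 2 + log (cosh (u + J * spinOf b)) := by
    have h4 : log 4 = 2 * log 2 := by
      rw [show (4 : ℝ) = 2 ^ 2 by norm_num, log_pow]; norm_num
    have hp := (cosh_pos (u + J)).ne'
    have hm := (cosh_pos (u - J)).ne'
    simp only [fieldShift, fieldLogNorm, log_div hp hm, log_mul (mul_ne_zero four_ne_zero hp) hm,
      log_mul four_ne_zero hp, h4]
    cases b <;> simp only [spinOf_true, spinOf_false, mul_one, mul_neg_one, ← sub_eq_add_neg] <;>
      ring
  rw [hlog, exp_add, exp_log two_pos, exp_log (cosh_pos _)]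

def chainEnergy (J K : ℝ) (y : ℕ → ℝ) (N : ℕ) (x : Fin (N + 1) → Bool) : ℝ :=
  J * ∑ i : Fin N, spinOf (x i.castSucc) * spinOf (x i.succ) +
    K * ∑ i : Fin (N + 1), spinOf (x i) * y i

lemma chainEnergy_snoc (J K : ℝ) (y : ℕ → ℝ) (N : ℕ) (x : Fin (N + 1) → Bool) (b : Bool) :
    chainEnergy J K y (N + 1) (Fin.snoc x b) =
      chainEnergy J K y N x + (J * spinOf (x (Fin.last N)) + K * y (N + 1)) * spinOf b := by
  simp only [chainEnergy, Fin.sum_univ_castSucc, Fin.snoc_castSucc, Fin.snoc_last,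
    Fin.succ_castSucc, Fin.val_castSucc, Fin.val_last, Fin.succ_last]
  ring

lemma sum_tuple_eq_sum_snoc {α M : Type*} [Fintype α] [AddCommMonoid M] (N : ℕ)
    (f : (Fin (N + 1) → α) → M) :
    ∑ x, f x = ∑ x : Fin N → α, ∑ a, f (Fin.snoc x a) := by
  rw [← (Fin.snocEquiv fun _ => α).sum_comp, Fintype.sum_prod_type_right]
  rfl

/-- The boundary field `A(v_{N+1})` on the last spin is what summing out a further spin leaves
behind; carrying it makes the induction on `N` close. -/
theorem sum_exp_chainEnergy_add_boundary (J K : ℝ) (y v : ℕ → ℝ) (N : ℕ)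
    (hv : ∀ i ≤ N, v i = K * y i + fieldShift J (v (i + 1))) :
    ∑ x : Fin (N + 1) → Bool,
        exp (chainEnergy J K y N x + fieldShift J (v (N + 1)) * spinOf (x (Fin.last N))) =
      2 * cosh (v 0) * exp (∑ i ∈ range N, fieldLogNorm J (v (i + 1))) := by
  induction N with
  | zero =>
    rw [← (Equiv.funUnique (Fin 1) Bool).symm.sum_comp]
    simp only [chainEnergy, Fin.sum_univ_zero, mul_zero, zero_add]
    rw [hv 0 le_rfl, range_zero, sum_empty, exp_zero, mul_one, ← sum_exp_mul_spinOf]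
    refine sum_congr rfl fun b _ => ?_
    simp only [Fin.sum_univ_succ, Fin.sum_univ_zero, Equiv.funUnique_symm_apply,
      uniqueElim_const, Fin.val_zero, add_zero, zero_add]
    congr 1
    ring
  | succ N ih =>
    have hlast : v (N + 1) = K * y (N + 1) + fieldShift J (v (N + 2)) := hv (N + 1) le_rfl
    calc ∑ x : Fin (N + 2) → Bool,
          exp (chainEnergy J K y (N + 1) x + fieldShift J (v (N + 2)) * spinOf (x (Fin.last _)))
        = ∑ x : Fin (N + 1) → Bool, exp (chainEnergy J K y N x) *
            ∑ b : Bool, exp ((v (N + 1) + J * spinOf (x (Fin.last N))) * spinOf b) := by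
          rw [sum_tuple_eq_sum_snoc]
          refine sum_congr rfl fun x _ => ?_
          rw [mul_sum]
          refine sum_congr rfl fun b _ => ?_
          rw [chainEnergy_snoc, Fin.snoc_last, ← exp_add, hlast]
          congr 1
          ring
      _ = ∑ x : Fin (N + 1) → Bool,
            exp (chainEnergy J K y N x + fieldShift J (v (N + 1)) * spinOf (x (Fin.last N))) *
              exp (fieldLogNorm J (v (N + 1))) := by
          refine sum_congr rfl fun x _ => ?_
          rw [sum_exp_mul_spinOf, two_mul_cosh_add_mul_spinOf, exp_add, exp_add, mul_assoc]
      _ = 2 * cosh (v 0) * exp (∑ i ∈ range (N + 1), fieldLogNorm J (v (i + 1))) := by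
          rw [← sum_mul, ih fun i hi => hv i (by omega), sum_range_succ, exp_add, mul_assoc]

theorem sum_exp_chainEnergy (J K : ℝ) (y v : ℕ → ℝ) (N : ℕ)
    (hv : ∀ i ≤ N, v i = K * y i + fieldShift J (v (i + 1))) (hv_end : v (N + 1) = 0) :
    ∑ x : Fin (N + 1) → Bool, exp (chainEnergy J K y N x) =
      2 * cosh (v 0) * exp (∑ i ∈ range N, fieldLogNorm J (v (i + 1))) := by
  simpa [hv_end, fieldShift_zero] using sum_exp_chainEnergy_add_boundary J K y v N hv

end IsingChain

open IsingChain

theorem stmt_12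
    (J K lam : ℝ)
    (hlam : lam = 4 * Real.cosh J * Real.cosh K)
    (A B : ℝ → ℝ)
    (hA : ∀ u, A u = (1 / 2) * Real.log (Real.cosh (u + J) / Real.cosh (u - J)))
    (hB : ∀ u, B u = (1 / 2) * Real.log (4 * Real.cosh (u + J) * Real.cosh (u - J)))
    (spin : Bool → ℝ) (hspin : ∀ b, spin b = if b then 1 else -1)
    (m n : ℕ) (hn : n = m + 1)
    (y : ℕ → ℝ)
    (w : ℕ → ℝ)
    (hw0 : ∀ i : ℕ, n < i → w i = 0)
    (hwrec : ∀ i : ℕ, i ≤ n → w i = K * y i + A (w (i + 1))) :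
    ((∑ x : Fin (m + 2) → Bool,
        Real.exp (J * ∑ i : Fin (m + 1), spin (x i.castSucc) * spin (x i.succ)
          + K * ∑ i : Fin (m + 2), spin (x i) * y i))
      / (∑ x : Fin (m + 1) → Bool,
        Real.exp (J * ∑ i : Fin m, spin (x i.castSucc) * spin (x i.succ)
          + K * ∑ i : Fin (m + 1), spin (x i) * y (1 + i)))
      = Real.cosh (w 0) * Real.exp (B (w 1)) / Real.cosh (w 1)) ∧
    ((Real.cosh J / lam ^ (n + 1) *
        ∑ x : Fin (m + 2) → Bool,
          Real.exp (J * ∑ i : Fin (m + 1), spin (x i.castSucc) * spin (x i.succ)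
            + K * ∑ i : Fin (m + 2), spin (x i) * y i))
      / (Real.cosh J / lam ^ n *
        ∑ x : Fin (m + 1) → Bool,
          Real.exp (J * ∑ i : Fin m, spin (x i.castSucc) * spin (x i.succ)
            + K * ∑ i : Fin (m + 1), spin (x i) * y (1 + i)))
      = (1 / lam) * Real.cosh (w 0) * Real.exp (B (w 1)) / Real.cosh (w 1)) := by
  obtain rfl : spin = spinOf := funext hspin
  obtain rfl : A = fieldShift J := funext hA
  obtain rfl : B = fieldLogNorm J := funext hB
  subst hn
  have hZ₀ := sum_exp_chainEnergy J K y w (m + 1) hwrec (hw0 _ (by omega))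
  have hZ₁ := sum_exp_chainEnergy J K (fun i => y (1 + i)) (fun i => w (1 + i)) m
    (fun i hi => hwrec (1 + i) (by omega)) (hw0 _ (by omega))
  simp only [chainEnergy] at hZ₀ hZ₁
  rw [hZ₀, hZ₁, sum_range_succ', exp_add]
  simp only [add_comm 1, zero_add]
  have hcosh : cosh (w 1) ≠ 0 := (cosh_pos _).ne'
  have hlam₀ : lam ≠ 0 := by rw [hlam]; positivity
  constructor
  · field_simp
  · have hcoshJ : cosh J ≠ 0 := (cosh_pos _).ne'
    rw [pow_succ]
    field_simp
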